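/- For every even population size N, every even m with 2 ≤ m ≤ N−2, and every ε > 0, the marginal cost–benefit ratio satisfies sup over all (μ1, μ0) ∈ [0,1]² with |μ1 − μ0| ≥ ε of η(m, μ1, μ0) ≤ N·exp(−mε²/4). -/
import Mathlib


open Finset

/-- Binomial pmf: probability that `Binomial(n, p)` equals `k`. -/
noncomputable def binomPMF (n : ℕ) (p : ℝ) (k : ℕ) : ℝ :=
  (n.choose k : ℝ) * p ^ k * (1 - p) ^ (n - k)

/-- `P(X < Y)` for independent `X ~ Binomial(n, p)` and `Y ~ Binomial(n, q)`. -/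
noncomputable def probLT (n : ℕ) (p q : ℝ) : ℝ :=
  ∑ i ∈ Finset.range (n + 1), ∑ j ∈ Finset.range (n + 1),
    if i < j then binomPMF n p i * binomPMF n q j else 0

/-- `P(X = Y)` for independent `X ~ Binomial(n, p)` and `Y ~ Binomial(n, q)`. -/
noncomputable def probEQ (n : ℕ) (p q : ℝ) : ℝ :=
  ∑ i ∈ Finset.range (n + 1), binomPMF n p i * binomPMF n q i

/-- `P(X > Y)` for independent `X ~ Binomial(n, p)` and `Y ~ Binomial(n, q)`. -/
noncomputable def probGT (n : ℕ) (p q : ℝ) : ℝ :=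
  ∑ i ∈ Finset.range (n + 1), ∑ j ∈ Finset.range (n + 1),
    if j < i then binomPMF n p i * binomPMF n q j else 0

/-- Tie-adjusted rollout error probability `e(m, μ1, μ0)` of the empirical success
rule, for a matched-pairs experiment of even size `m` with `n = m/2` observations
per arm. -/
noncomputable def errProb (m : ℕ) (μ1 μ0 : ℝ) : ℝ :=
  if μ0 < μ1 then probLT (m / 2) μ1 μ0 + (1 / 2) * probEQ (m / 2) μ1 μ0
  else if μ1 = μ0 then 1 / 2
  else probGT (m / 2) μ1 μ0 + (1 / 2) * probEQ (m / 2) μ1 μ0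

/-- The marginal cost–benefit ratio `η(m, μ1, μ0)` for population size `N`. -/
noncomputable def eta (N m : ℕ) (μ1 μ0 : ℝ) : ℝ :=
  ((N : ℝ) - (m : ℝ)) * errProb m μ1 μ0 - ((N : ℝ) - (m : ℝ) - 2) * errProb (m + 2) μ1 μ0

lemma binomPMF_nonneg {n : ℕ} {p : ℝ} (hp0 : 0 ≤ p) (hp1 : p ≤ 1) (k : ℕ) :
    0 ≤ binomPMF n p k := by
  unfold binomPMF
  have h1 : (0:ℝ) ≤ 1 - p := by linarith
  positivity

lemma binom_mgf (n : ℕ) (p x : ℝ) :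
    ∑ k ∈ Finset.range (n + 1), binomPMF n p k * x ^ k = (p * x + (1 - p)) ^ n := by
  rw [add_pow]
  apply Finset.sum_congr rfl
  intro k _
  unfold binomPMF
  rw [mul_pow]
  ring

lemma probGT_eq (n : ℕ) (p q : ℝ) : probGT n p q = probLT n q p := by
  rw [probGT, probLT, Finset.sum_comm]
  apply Finset.sum_congr rfl
  intro j _
  apply Finset.sum_congr rfl
  intro i _
  split_ifs with h
  · ring
  · rfl

lemma probEQ_comm (n : ℕ) (p q : ℝ) : probEQ n p q = probEQ n q p := by
  unfold probEQ
  apply Finset.sum_congr rfl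
  intro i _
  ring

lemma chernoff (n : ℕ) (p q r : ℝ) (hp0 : 0 ≤ p) (hp1 : p ≤ 1) (hq0 : 0 ≤ q) (hq1 : q ≤ 1)
    (hr : 1 ≤ r) :
    probLT n p q + probEQ n p q ≤ (p * r⁻¹ + (1 - p)) ^ n * (q * r + (1 - q)) ^ n := by
  have hr0 : (0:ℝ) < r := lt_of_lt_of_le one_pos hr
  have key : probLT n p q + probEQ n p q ≤
      ∑ i ∈ Finset.range (n+1), ∑ j ∈ Finset.range (n+1),
        (binomPMF n p i * (r⁻¹) ^ i) * (binomPMF n q j * r ^ j) := by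
    unfold probLT probEQ
    rw [← Finset.sum_add_distrib]
    apply Finset.sum_le_sum
    intro i hi
    have heq : binomPMF n p i * binomPMF n q i =
        ∑ j ∈ Finset.range (n+1), if j = i then binomPMF n p i * binomPMF n q j else 0 := by
      rw [Finset.sum_ite_eq' (Finset.range (n+1)) i (fun j => binomPMF n p i * binomPMF n q j)]
      simp [hi]
    rw [heq, ← Finset.sum_add_distrib]
    apply Finset.sum_le_sum
    intro j _
    have hfp := binomPMF_nonneg hp0 hp1 i (n := n)
    have hfq := binomPMF_nonneg hq0 hq1 j (n := n)
    have hprod : 0 ≤ binomPMF n p i * binomPMF n q j := mul_nonneg hfp hfq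
    have hRHS : binomPMF n p i * (r⁻¹) ^ i * (binomPMF n q j * r ^ j)
        = (binomPMF n p i * binomPMF n q j) * ((r ^ i)⁻¹ * r ^ j) := by
      rw [inv_pow]; ring
    by_cases hij : i ≤ j
    · have hpow : (1:ℝ) ≤ (r ^ i)⁻¹ * r ^ j := by
        have : r ^ j = r ^ (j - i) * r ^ i := by
          rw [← pow_add]; congr 1; omega
        rw [this, mul_comm (r ^ (j-i)) (r^i), ← mul_assoc, inv_mul_cancel₀ (by positivity), one_mul]
        exact one_le_pow₀ hr
      have hle : binomPMF n p i * binomPMF n q j ≤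
          binomPMF n p i * (r⁻¹) ^ i * (binomPMF n q j * r ^ j) := by
        rw [hRHS]
        nlinarith [mul_nonneg hprod (le_trans zero_le_one hpow)]
      rcases eq_or_lt_of_le hij with h | h
      · rw [if_neg (by omega), if_pos (by omega)]
        linarith
      · rw [if_pos h, if_neg (by omega)]
        linarith
    · have h1 : ¬ (i < j) := by omega
      have h2 : ¬ (j = i) := by omega
      rw [if_neg h1, if_neg h2, hRHS]
      have : (0:ℝ) ≤ (r ^ i)⁻¹ * r ^ j := by positivity
      nlinarith
  refine le_trans key ?_
  rw [← binom_mgf n p r⁻¹, ← binom_mgf n q r]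
  rw [Finset.sum_mul_sum]

lemma pair_bound (p q ε : ℝ) (hp1 : p ≤ 1) (hq0 : 0 ≤ q) (hε : 0 < ε) (hgap : q + ε ≤ p) :
    (p * (1 + 2*ε)⁻¹ + (1 - p)) * (q * (1 + 2*ε) + (1 - q)) ≤ 1 - ε^2/2 := by
  have hε1 : ε ≤ 1 := by linarith
  have hr : (0:ℝ) < 1 + 2*ε := by linarith
  have hb : (1-p)*q ≤ (1-ε)^2/4 := by nlinarith [sq_nonneg (1 - ε - 2*q), mul_nonneg hq0 (by linarith : (0:ℝ) ≤ p - q - ε)]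
  have hA : p * (1 + 2*ε)⁻¹ + (1 - p) = (p + (1-p)*(1+2*ε)) / (1+2*ε) := by
    field_simp
  rw [hA, div_mul_eq_mul_div, div_le_iff₀ hr]
  nlinarith [mul_nonneg hε.le (by linarith : (0:ℝ) ≤ p - q - ε), mul_nonneg (mul_nonneg hε.le hε.le) hε.le, sq_nonneg ε]

lemma err_half_bound (n : ℕ) (p q ε : ℝ) (hp0 : 0 ≤ p) (hp1 : p ≤ 1) (hq0 : 0 ≤ q) (hq1 : q ≤ 1)
    (hε : 0 < ε) (hgap : q + ε ≤ p) :
    probLT n p q + probEQ n p q ≤ Real.exp (-(n:ℝ) * ε^2 / 2) := by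
  have hε1 : ε ≤ 1 := by linarith
  have hr : (1:ℝ) ≤ 1 + 2*ε := by linarith
  refine le_trans (chernoff n p q (1+2*ε) hp0 hp1 hq0 hq1 hr) ?_
  rw [← mul_pow]
  have hA0 : 0 ≤ p * (1+2*ε)⁻¹ + (1 - p) := by
    have : (0:ℝ) < 1 + 2*ε := by linarith
    have h1 : 0 ≤ p * (1+2*ε)⁻¹ := by positivity
    linarith
  have hB0 : 0 ≤ q * (1+2*ε) + (1 - q) := by nlinarith
  have hAB : (p * (1+2*ε)⁻¹ + (1 - p)) * (q * (1+2*ε) + (1 - q)) ≤ 1 - ε^2/2 :=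
    pair_bound p q ε hp1 hq0 hε hgap
  have hexp : (1:ℝ) - ε^2/2 ≤ Real.exp (-(ε^2/2)) := by
    have := Real.add_one_le_exp (-(ε^2/2))
    linarith
  calc ((p * (1+2*ε)⁻¹ + (1 - p)) * (q * (1+2*ε) + (1 - q))) ^ n
      ≤ (Real.exp (-(ε^2/2))) ^ n := by
        apply pow_le_pow_left₀ (mul_nonneg hA0 hB0)
        linarith
    _ = Real.exp (-(n:ℝ) * ε^2 / 2) := by
        rw [← Real.exp_nat_mul]
        ring_nf

lemma errProb_nonneg (m : ℕ) (μ1 μ0 : ℝ) (h1a : 0 ≤ μ1) (h1b : μ1 ≤ 1)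
    (h0a : 0 ≤ μ0) (h0b : μ0 ≤ 1) : 0 ≤ errProb m μ1 μ0 := by
  have hLT : 0 ≤ probLT (m/2) μ1 μ0 := by
    apply Finset.sum_nonneg; intro i _; apply Finset.sum_nonneg; intro j _
    split_ifs
    · exact mul_nonneg (binomPMF_nonneg h1a h1b i) (binomPMF_nonneg h0a h0b j)
    · exact le_refl 0
  have hGT : 0 ≤ probGT (m/2) μ1 μ0 := by
    apply Finset.sum_nonneg; intro i _; apply Finset.sum_nonneg; intro j _
    split_ifs
    · exact mul_nonneg (binomPMF_nonneg h1a h1b i) (binomPMF_nonneg h0a h0b j)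
    · exact le_refl 0
  have hEQ : 0 ≤ probEQ (m/2) μ1 μ0 := by
    apply Finset.sum_nonneg; intro i _
    exact mul_nonneg (binomPMF_nonneg h1a h1b i) (binomPMF_nonneg h0a h0b i)
  unfold errProb
  split_ifs <;> linarith

lemma probEQ_nonneg (n : ℕ) (μ1 μ0 : ℝ) (h1a : 0 ≤ μ1) (h1b : μ1 ≤ 1)
    (h0a : 0 ≤ μ0) (h0b : μ0 ≤ 1) : 0 ≤ probEQ n μ1 μ0 := by
  apply Finset.sum_nonneg; intro i _
  exact mul_nonneg (binomPMF_nonneg h1a h1b i) (binomPMF_nonneg h0a h0b i)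

lemma errProb_le (m : ℕ) (hm : Even m) (μ1 μ0 ε : ℝ)
    (h1a : 0 ≤ μ1) (h1b : μ1 ≤ 1) (h0a : 0 ≤ μ0) (h0b : μ0 ≤ 1)
    (hε : 0 < ε) (hgap : ε ≤ |μ1 - μ0|) :
    errProb m μ1 μ0 ≤ Real.exp (-(m:ℝ) * ε^2 / 4) := by
  obtain ⟨k, hk⟩ := hm
  have hk2 : m / 2 = k := by omega
  have hcast : -((m/2 : ℕ) : ℝ) * ε^2 / 2 = -(m:ℝ) * ε^2 / 4 := by
    subst hk; rw [hk2]; push_cast; ring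
  have main : ∀ p q : ℝ, 0 ≤ p → p ≤ 1 → 0 ≤ q → q ≤ 1 → q + ε ≤ p →
      probLT (m/2) p q + (1/2) * probEQ (m/2) p q ≤ Real.exp (-(m:ℝ) * ε^2 / 4) := by
    intro p q hp0 hp1 hq0 hq1 hg
    have h := err_half_bound (m/2) p q ε hp0 hp1 hq0 hq1 hε hg
    have hEQ := probEQ_nonneg (m/2) p q hp0 hp1 hq0 hq1
    rw [← hcast]
    linarith
  rcases lt_trichotomy μ0 μ1 with h | h | h
  · rw [errProb, if_pos h]
    have : |μ1 - μ0| = μ1 - μ0 := abs_of_pos (by linarith)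
    exact main μ1 μ0 h1a h1b h0a h0b (by rw [this] at hgap; linarith)
  · exfalso
    rw [h] at hgap
    simp at hgap
    linarith
  · rw [errProb, if_neg (by linarith), if_neg (by linarith), probGT_eq, probEQ_comm]
    have : |μ1 - μ0| = μ0 - μ1 := by rw [abs_of_neg (by linarith)]; ring
    exact main μ0 μ1 h0a h0b h1a h1b (by rw [this] at hgap; linarith)

/-- Off-diagonal bound on the marginal cost–benefit ratio: the supremum of
`η(m, μ1, μ0)` over all `(μ1, μ0) ∈ [0,1]²` with `|μ1 − μ0| ≥ ε` is at most
`N · exp(−m ε² / 4)`. -/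
theorem eta_offdiagonal_bound (N m : ℕ) (hN : Even N) (hm : Even m)
    (h2 : 2 ≤ m) (hmN : m + 2 ≤ N) (ε : ℝ) (hε : 0 < ε)
    (μ1 μ0 : ℝ) (h1 : μ1 ∈ Set.Icc (0 : ℝ) 1) (h0 : μ0 ∈ Set.Icc (0 : ℝ) 1)
    (hgap : ε ≤ |μ1 - μ0|) :
    eta N m μ1 μ0 ≤ (N : ℝ) * Real.exp (-(m : ℝ) * ε ^ 2 / 4) := by
  obtain ⟨h1a, h1b⟩ := h1
  obtain ⟨h0a, h0b⟩ := h0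
  have hNm : (m:ℝ) + 2 ≤ (N:ℝ) := by exact_mod_cast hmN
  have he2 : 0 ≤ errProb (m+2) μ1 μ0 := errProb_nonneg _ _ _ h1a h1b h0a h0b
  have he1 : 0 ≤ errProb m μ1 μ0 := errProb_nonneg _ _ _ h1a h1b h0a h0b
  have hle : errProb m μ1 μ0 ≤ Real.exp (-(m:ℝ) * ε^2 / 4) :=
    errProb_le m hm μ1 μ0 ε h1a h1b h0a h0b hε hgap
  have h3 : ((N:ℝ) - m - 2) * errProb (m+2) μ1 μ0 ≥ 0 :=
    mul_nonneg (by linarith) he2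
  unfold eta
  have hN0 : (0:ℝ) ≤ (N:ℝ) := Nat.cast_nonneg N
  nlinarith [mul_le_mul_of_nonneg_left hle (by linarith : (0:ℝ) ≤ (N:ℝ) - m), mul_nonneg (by linarith : (0:ℝ) ≤ (m:ℝ)) he1]
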